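/- arXiv:2201.12201 — 7 statements merged into one kernel-verified Lean document; each statement's English description precedes it below -/
import Mathlib

section
/- For vectors v₁,…,v_ℓ in a real inner product space H and an orthogonal projection P on H, the Gram determinant satisfies G(P v₁,…,P v_ℓ) ≤ G(v₁,…,v_ℓ). -/
/-!
Since `⟪x - P x, y - P y⟫ = ⟪x, y⟫ - ⟪P x, P y⟫` for a symmetric idempotent `P`, the difference
of the two Gram matrices is the Gram matrix of the vectors `vᵢ - P vᵢ`, so `G(P v) ≤ G(v)` in the
Loewner order. The determinant is monotone on positive semidefinite matrices: for `0 ≤ A ≤ B` with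
`B` invertible, conjugating by `B^{-1/2}` gives `0 ≤ B^{-1/2} A B^{-1/2} ≤ 1`, whose eigenvalues lie
in `[0, 1]`.
-/

open scoped MatrixOrder

section
variable {𝕜 E : Type*} [RCLike 𝕜] [NormedAddCommGroup E] [InnerProductSpace 𝕜 E] {P : E →ₗ[𝕜] E}

lemma LinearMap.IsSymmetric.inner_sub_map_sub_map (hsymm : P.IsSymmetric)
    (hidem : IsIdempotentElem P) (x y : E) :
    inner 𝕜 (x - P x) (y - P y) = inner 𝕜 x y - inner 𝕜 (P x) (P y) := by
  have hPP : inner 𝕜 (P x) (P y) = inner 𝕜 x (P y) := by rw [hsymm, ← Module.End.mul_apply, hidem]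
  rw [inner_sub_left, inner_sub_right, inner_sub_right, hsymm x y, hPP]
  ring

lemma Matrix.gram_comp_le_gram {n : Type*} [Fintype n] (hsymm : P.IsSymmetric)
    (hidem : IsIdempotentElem P) (v : n → E) : gram 𝕜 (P ∘ v) ≤ gram 𝕜 v := by
  have hdiff : gram 𝕜 v - gram 𝕜 (P ∘ v) = gram 𝕜 (v - P ∘ v) := by
    ext i j
    simp only [sub_apply, gram_apply, Pi.sub_apply, Function.comp_apply,
      hsymm.inner_sub_map_sub_map hidem]
  rw [le_iff, hdiff]
  exact posSemidef_gram 𝕜 _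

end

namespace Matrix

variable {n : Type*} [Fintype n] [DecidableEq n]

lemma det_le_one_of_nonneg_of_le_one {M : Matrix n n ℝ} (h0 : 0 ≤ M) (h1 : M ≤ 1) :
    M.det ≤ 1 := by
  have hM : M.IsHermitian := (nonneg_iff_posSemidef.mp h0).isHermitian
  rw [hM.det_eq_prod_eigenvalues]
  refine Finset.prod_le_one (fun i _ => ?_) (fun i _ => ?_)
  · exact spectrum_nonneg_of_nonneg h0 (hM.eigenvalues_mem_spectrum_real i)
  · exact (CFC.le_one_iff M).mp h1 _ (hM.eigenvalues_mem_spectrum_real i)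

lemma det_eq_zero_of_nonneg_of_le {A B : Matrix n n ℝ} (hA : 0 ≤ A) (hAB : A ≤ B)
    (hB : B.det = 0) : A.det = 0 := by
  obtain ⟨x, hx, hBx⟩ := exists_mulVec_eq_zero_iff.mpr hB
  refine exists_mulVec_eq_zero_iff.mp ⟨x, hx, ?_⟩
  rw [← (nonneg_iff_posSemidef.mp hA).dotProduct_mulVec_zero_iff]
  have hdiff := (le_iff.mp hAB).dotProduct_mulVec_nonneg x
  rw [sub_mulVec, dotProduct_sub, hBx, dotProduct_zero] at hdiff
  exact le_antisymm (by linarith) ((nonneg_iff_posSemidef.mp hA).dotProduct_mulVec_nonneg x)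

lemma det_le_det_of_nonneg_of_le {A B : Matrix n n ℝ} (hA : 0 ≤ A) (hAB : A ≤ B) :
    A.det ≤ B.det := by
  have hB : 0 ≤ B := hA.trans hAB
  by_cases hdet : B.det = 0
  · rw [det_eq_zero_of_nonneg_of_le hA hAB hdet, hdet]
  set S := CFC.sqrt B
  have hSS : S * S = B := CFC.sqrt_mul_sqrt_self B
  have hS : IsUnit S :=
    (CFC.isUnit_sqrt_iff B).mpr ((isUnit_iff_isUnit_det B).mpr (Ne.isUnit hdet))
  have hSstar : star S⁻¹ = S⁻¹ := by
    rw [star_eq_conjTranspose, conjTranspose_nonsing_inv, ← star_eq_conjTranspose,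
      (CFC.sqrt_nonneg B).isSelfAdjoint.star_eq]
  have hSdet : IsUnit S.det := (isUnit_iff_isUnit_det S).mp hS
  have hM0 : 0 ≤ S⁻¹ * A * S⁻¹ := by
    simpa only [hSstar] using star_left_conjugate_nonneg hA S⁻¹
  have hM1 : S⁻¹ * A * S⁻¹ ≤ 1 := by
    have hB1 : S⁻¹ * B * S⁻¹ = 1 := by
      rw [← hSS, ← Matrix.mul_assoc, nonsing_inv_mul S hSdet, Matrix.one_mul,
        mul_nonsing_inv S hSdet]
    simpa only [hSstar, hB1] using star_left_conjugate_le_conjugate hAB S⁻¹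
  have hA_conj : A = S * (S⁻¹ * A * S⁻¹) * S := by
    simp only [← Matrix.mul_assoc, mul_nonsing_inv S hSdet, Matrix.one_mul]
    rw [Matrix.mul_assoc, nonsing_inv_mul S hSdet, Matrix.mul_one]
  calc A.det = B.det * (S⁻¹ * A * S⁻¹).det := by
        rw [← hSS, det_mul]; nth_rw 1 [hA_conj]; simp only [det_mul]; ring
    _ ≤ B.det * 1 := mul_le_mul_of_nonneg_left (det_le_one_of_nonneg_of_le_one hM0 hM1)
        (nonneg_iff_posSemidef.mp hB).det_nonneg
    _ = B.det := mul_one _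

end Matrix

/-- Gram determinants do not increase under orthogonal projection: if `P` is an
orthogonal projection (idempotent and self-adjoint linear map) on a real inner product
space, then `G(P v₁,…,P v_ℓ) ≤ G(v₁,…,v_ℓ)`. -/
theorem stmt5 {H : Type*} [NormedAddCommGroup H] [InnerProductSpace ℝ H]
    (ℓ : ℕ) (v : Fin ℓ → H) (P : H →ₗ[ℝ] H)
    (hidem : ∀ x, P (P x) = P x)
    (hsa : ∀ x y, (inner ℝ (P x) y : ℝ) = inner ℝ x (P y)) :
    Matrix.det (Matrix.of fun i j : Fin ℓ => (inner ℝ (P (v i)) (P (v j)) : ℝ)) ≤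
      Matrix.det (Matrix.of fun i j : Fin ℓ => (inner ℝ (v i) (v j) : ℝ)) := by
  exact Matrix.det_le_det_of_nonneg_of_le (Matrix.posSemidef_gram ℝ _).nonneg
    (Matrix.gram_comp_le_gram hsa (LinearMap.ext hidem) v)
end

section
/- If u₁,…,u_ℓ, v₁,…,v_{ℓ'} are vectors in a real inner product space and P is the orthogonal projection onto the orthogonal complement of the span of u₁,…,u_ℓ, then the Gram determinant factors as G(u₁,…,u_ℓ, v₁,…,v_{ℓ'}) = G(u₁,…,u_ℓ) · G(P v₁,…,P v_{ℓ'}). -/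
/-!
Write `v j = P (v j) + ∑ i, c j i • u i`. Then `(u, v)` is obtained from `(u, P ∘ v)` by a block
unitriangular matrix `T`, so its Gram matrix is `Tᴴ * G * T` with `G` the Gram matrix of
`(u, P ∘ v)`, and the determinants agree. Since every `P (v j)` is orthogonal to every `u i`,
`G` is block diagonal.
-/

/-- The Gram determinant of vectors in a real inner product space. -/
noncomputable def gram {H : Type*} [NormedAddCommGroup H] [InnerProductSpace ℝ H]
    {m : ℕ} (v : Fin m → H) : ℝ :=
  Matrix.det (Matrix.of fun i j : Fin m => (inner ℝ (v i) (v j) : ℝ))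

open scoped InnerProductSpace

namespace Matrix

open Submodule

variable {𝕜 E ι κ : Type*} [RCLike 𝕜] [SeminormedAddCommGroup E] [InnerProductSpace 𝕜 E]

theorem gram_sum_smul [Fintype ι] (w : ι → E) (T : Matrix ι κ 𝕜) :
    gram 𝕜 (fun j => ∑ i, T i j • w i) = Tᴴ * gram 𝕜 w * T := by
  ext a b
  simp only [gram_apply, sum_inner, inner_sum, inner_smul_left, inner_smul_right, mul_apply,
    conjTranspose_apply, Finset.sum_mul, Finset.mul_sum, RCLike.star_def]
  refine Finset.sum_congr rfl fun i _ => Finset.sum_congr rfl fun k _ => ?_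
  ring

theorem det_gram_sum_smul [Fintype ι] [DecidableEq ι] (w : ι → E) (T : Matrix ι ι 𝕜) :
    (gram 𝕜 fun j => ∑ i, T i j • w i).det = star T.det * T.det * (gram 𝕜 w).det := by
  rw [gram_sum_smul, det_mul, det_mul, det_conjTranspose]
  ring

theorem gram_sumElim_of_inner_eq_zero (u : ι → E) (w : κ → E)
    (h : ∀ i j, ⟪u i, w j⟫_𝕜 = 0) :
    gram 𝕜 (Sum.elim u w) = fromBlocks (gram 𝕜 u) 0 0 (gram 𝕜 w) := by
  ext (i | i) (j | j)
  · rfl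
  · exact h i j
  · exact inner_eq_zero_symm.mp (h j i)
  · rfl

theorem det_gram_sumElim_of_sub_mem_span [Fintype ι] [Fintype κ] [DecidableEq ι]
    [DecidableEq κ] (u : ι → E) {v v' : κ → E}
    (h : ∀ j, v j - v' j ∈ span 𝕜 (Set.range u)) :
    (gram 𝕜 (Sum.elim u v)).det = (gram 𝕜 (Sum.elim u v')).det := by
  choose c hc using fun j => (mem_span_range_iff_exists_fun 𝕜).mp (h j)
  let T : Matrix (ι ⊕ κ) (ι ⊕ κ) 𝕜 := fromBlocks 1 (of fun i j => c j i) 0 1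
  have hT : Sum.elim u v = fun b => ∑ a, T a b • Sum.elim u v' a := by
    ext (j | j)
    · simp [T, Fintype.sum_sum_type, one_apply]
    · simp [T, Fintype.sum_sum_type, one_apply, hc]
  rw [hT, det_gram_sum_smul]
  simp [T]

theorem det_gram_append {m n : ℕ} (u : Fin m → E) (v : Fin n → E) :
    (gram 𝕜 (Fin.append u v)).det = (gram 𝕜 (Sum.elim u v)).det :=
  calc (gram 𝕜 (Fin.append u v)).det
      = ((gram 𝕜 (Fin.append u v)).submatrix finSumFinEquiv finSumFinEquiv).det :=
        (det_submatrix_equiv_self _ _).symm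
    _ = (gram 𝕜 (Sum.elim u v)).det :=
        congrArg det (congrArg (gram 𝕜) Fin.append_comp_sumElim)

end Matrix

theorem gram_eq_det_gram {H : Type*} [NormedAddCommGroup H] [InnerProductSpace ℝ H] {m : ℕ}
    (v : Fin m → H) : gram v = (Matrix.gram ℝ v).det :=
  rfl

/-- Factorization of Gram determinants: if `P` is the orthogonal projection onto the
orthogonal complement of `span{u₁,…,u_ℓ}` (characterized by `x − Px ∈ span u` and
`Px ⟂ span u`), then `G(u₁,…,u_ℓ,v₁,…,v_{ℓ'}) = G(u₁,…,u_ℓ) · G(P v₁,…,P v_{ℓ'})`. -/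
theorem stmt7 {H : Type*} [NormedAddCommGroup H] [InnerProductSpace ℝ H]
    (ℓ ℓ' : ℕ) (u : Fin ℓ → H) (v : Fin ℓ' → H) (P : H →ₗ[ℝ] H)
    (hP1 : ∀ x, x - P x ∈ Submodule.span ℝ (Set.range u))
    (hP2 : ∀ x, ∀ w ∈ Submodule.span ℝ (Set.range u), (inner ℝ (P x) w : ℝ) = 0) :
    gram (Fin.append u v) = gram u * gram (fun i => P (v i)) := by
  have hPu : ∀ i j, ⟪u i, P (v j)⟫_ℝ = 0 := fun i j =>
    inner_eq_zero_symm.mp (hP2 _ _ (Submodule.subset_span ⟨i, rfl⟩))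
  simp only [gram_eq_det_gram]
  rw [Matrix.det_gram_append, Matrix.det_gram_sumElim_of_sub_mem_span u fun j => hP1 (v j),
    Matrix.gram_sumElim_of_inner_eq_zero _ _ hPu, Matrix.det_fromBlocks_zero₁₂]
end

section
/- For vectors v₁,…,v_n in a real inner product space with indices interpreted cyclically (v_{n+1} = v₁ etc.), define I_ℓ := ∏_{j=1}^n G(v_j, v_{j+1},…, v_{j+ℓ−1}) for ℓ ∈ {1,…,n}. Then the sequence (I₁,…,I_n) is log-concave: I_ℓ² ≥ I_{ℓ−1} · I_{ℓ+1} for every ℓ ∈ {2,…,n−1}. -/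
/-- The cyclic product `I_ℓ = ∏_{j=1}^n G(v_j, v_{j+1}, …, v_{j+ℓ-1})` of Gram
determinants of `ℓ` cyclically consecutive vectors among `v₁,…,v_n` (indices mod `n`). -/
noncomputable def Icyc {H : Type*} [NormedAddCommGroup H] [InnerProductSpace ℝ H]
    {n : ℕ} [NeZero n] (v : ZMod n → H) (ℓ : ℕ) : ℝ :=
  ∏ j : ZMod n,
    Matrix.det (Matrix.of fun a b : Fin ℓ =>
      (inner ℝ (v (j + ((a : ℕ) : ZMod n))) (v (j + ((b : ℕ) : ZMod n))) : ℝ))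

/-!
The Gram determinant of `(a, w₁, …, w_k)` is `G(w) · dist(a, span w)²`. Hence, writing `W` for
`(v_{j+1}, …, v_{j+ℓ-1})`, the inequality `G(W) G(v_j, W, v_{j+ℓ}) ≤ G(v_j, W) G(W, v_{j+ℓ})`
reduces to `dist(v_j, span(W, v_{j+ℓ})) ≤ dist(v_j, span W)`. Multiplying it over all `j` and
shifting indices cyclically gives `I_{ℓ-1} I_{ℓ+1} ≤ I_ℓ²`.
-/

open Matrix Submodule

lemma Matrix.det_add_single_zero_zero {R : Type*} [CommRing R] {k : ℕ}
    (M : Matrix (Fin (k + 1)) (Fin (k + 1)) R) (c : R) :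
    (M + single 0 0 c).det = M.det + c * (M.submatrix Fin.succ Fin.succ).det := by
  have hsub : ∀ j : Fin (k + 1), (M + single 0 0 c).submatrix Fin.succ j.succAbove =
      M.submatrix Fin.succ j.succAbove := fun j => by
    ext a b
    simp [(Fin.succ_ne_zero _).symm]
  simp only [det_succ_row_zero M, det_succ_row_zero (M + single 0 0 c), hsub, Fin.sum_univ_succ]
  simp [(Fin.succ_ne_zero _).symm]
  ring

section Gram

variable {H : Type*} [NormedAddCommGroup H] [InnerProductSpace ℝ H]

lemma det_gram_cons_of_mem_span {k : ℕ} {w : Fin k → H} {a : H}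
    (ha : a ∈ span ℝ (Set.range w)) : (gram ℝ (Fin.cons a w : Fin (k + 1) → H)).det = 0 := by
  by_contra h
  exact (linearIndependent_finCons.mp (det_gram_ne_zero_iff_linearIndependent.mp h)).2 ha

lemma det_gram_cons_add_of_mem_orthogonal {k : ℕ} {w : Fin k → H} {p q : H}
    (hp : p ∈ span ℝ (Set.range w)) (hq : q ∈ (span ℝ (Set.range w))ᗮ) :
    (gram ℝ (Fin.cons (p + q) w : Fin (k + 1) → H)).det = (gram ℝ w).det * ‖q‖ ^ 2 := by
  have hwq : ∀ i, inner ℝ (w i) q = 0 := fun i => hq _ (subset_span ⟨i, rfl⟩)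
  have hqw : ∀ i, inner ℝ q (w i) = 0 := fun i => by rw [real_inner_comm, hwq]
  have hgram : gram ℝ (Fin.cons (p + q) w : Fin (k + 1) → H) =
      gram ℝ (Fin.cons p w : Fin (k + 1) → H) + single 0 0 (‖q‖ ^ 2) := by
    ext i j
    refine Fin.cases (Fin.cases ?_ fun j => ?_) (fun i => Fin.cases ?_ fun j => ?_) i j <;>
      simp [gram_apply, (Fin.succ_ne_zero _).symm, inner_add_left, inner_add_right, hwq, hqw,
        norm_add_sq_real, hq p hp]
  rw [hgram, det_add_single_zero_zero, det_gram_cons_of_mem_span hp, zero_add, mul_comm]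
  rfl

lemma det_gram_cons_eq_mul_infDist_sq {k : ℕ} (w : Fin k → H) (a : H) :
    (gram ℝ (Fin.cons a w : Fin (k + 1) → H)).det =
      (gram ℝ w).det * Metric.infDist a (span ℝ (Set.range w)) ^ 2 := by
  set K := span ℝ (Set.range w)
  have : FiniteDimensional ℝ K := FiniteDimensional.span_of_finite ℝ (Set.finite_range w)
  have hdist : Metric.infDist a K = ‖a - K.starProjection a‖ := by
    rw [Metric.infDist_eq_iInf, starProjection_minimal]
    simp_rw [dist_eq_norm]
    rfl
  rw [hdist, ← det_gram_cons_add_of_mem_orthogonal (K.starProjection_apply_mem a)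
    (sub_starProjection_mem_orthogonal a), add_sub_cancel]

lemma det_gram_mul_det_gram_cons_snoc_le {k : ℕ} (w : Fin k → H) (a b : H) :
    (gram ℝ w).det * (gram ℝ (Fin.cons a (Fin.snoc w b) : Fin (k + 2) → H)).det ≤
      (gram ℝ (Fin.cons a w : Fin (k + 1) → H)).det *
        (gram ℝ (Fin.snoc w b : Fin (k + 1) → H)).det := by
  have hspan : span ℝ (Set.range w) ≤ span ℝ (Set.range (Fin.snoc w b : Fin (k + 1) → H)) :=
    span_mono (by simp [Fin.range_snoc])
  have hdist := Metric.infDist_le_infDist_of_subset (x := a) hspan ⟨0, zero_mem _⟩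
  have hG := mul_nonneg (posSemidef_gram ℝ w).det_nonneg
    (posSemidef_gram ℝ (Fin.snoc w b : Fin (k + 1) → H)).det_nonneg
  rw [det_gram_cons_eq_mul_infDist_sq, det_gram_cons_eq_mul_infDist_sq]
  calc _ = ((gram ℝ w).det * (gram ℝ (Fin.snoc w b : Fin (k + 1) → H)).det) *
        Metric.infDist a (span ℝ (Set.range (Fin.snoc w b : Fin (k + 1) → H))) ^ 2 := by ring
    _ ≤ ((gram ℝ w).det * (gram ℝ (Fin.snoc w b : Fin (k + 1) → H)).det) *
        Metric.infDist a (span ℝ (Set.range w)) ^ 2 := by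
      gcongr
      exact Metric.infDist_nonneg
    _ = _ := by ring

end Gram

section Window

variable {R α : Type*} [AddCommMonoidWithOne R]

def window (v : R → α) (j : R) (m : ℕ) : Fin m → α := fun a => v (j + (a : ℕ))

lemma window_succ_eq_cons (v : R → α) (j : R) (m : ℕ) :
    window v j (m + 1) = Fin.cons (v j) (window v (j + 1) m) := by
  ext a
  refine Fin.cases ?_ (fun a => ?_) a
  · simp [window]
  · simp [window, add_assoc, add_comm (1 : R)]

lemma window_succ_eq_snoc (v : R → α) (j : R) (m : ℕ) :
    window v j (m + 1) = Fin.snoc (window v j m) (v (j + m)) := by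
  ext a
  refine Fin.lastCases ?_ (fun a => ?_) a <;> simp [window]

end Window

lemma det_gram_window_mul_le {H R : Type*} [NormedAddCommGroup H] [InnerProductSpace ℝ H]
    [AddCommMonoidWithOne R] (v : R → H) (j : R) (k : ℕ) :
    (gram ℝ (window v (j + 1) k)).det * (gram ℝ (window v j (k + 2))).det ≤
      (gram ℝ (window v j (k + 1))).det * (gram ℝ (window v (j + 1) (k + 1))).det := by
  rw [window_succ_eq_cons v j (k + 1), window_succ_eq_cons v j k, window_succ_eq_snoc v (j + 1) k]
  exact det_gram_mul_det_gram_cons_snoc_le _ _ _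

theorem stmt10_general {H : Type*} [NormedAddCommGroup H] [InnerProductSpace ℝ H]
    (n : ℕ) [NeZero n] (v : ZMod n → H) (ℓ : ℕ) (h2 : 2 ≤ ℓ) :
    Icyc v (ℓ - 1) * Icyc v (ℓ + 1) ≤ (Icyc v ℓ) ^ 2 := by
  obtain ⟨k, rfl⟩ : ∃ k, ℓ = k + 1 := ⟨ℓ - 1, by omega⟩
  have hIcyc : ∀ m, Icyc v m = ∏ j, (gram ℝ (window v j m)).det := fun m => rfl
  have hshift : ∀ m, Icyc v m = ∏ j, (gram ℝ (window v (j + 1) m)).det := fun m =>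
    (Fintype.prod_equiv (Equiv.addRight 1) _ _ fun _ => rfl).symm
  rw [Nat.add_sub_cancel]
  calc Icyc v k * Icyc v (k + 2)
      = ∏ j, (gram ℝ (window v (j + 1) k)).det * (gram ℝ (window v j (k + 2))).det := by
        rw [hshift, hIcyc, Finset.prod_mul_distrib]
    _ ≤ ∏ j, (gram ℝ (window v j (k + 1))).det * (gram ℝ (window v (j + 1) (k + 1))).det :=
        Finset.prod_le_prod (fun _ _ => mul_nonneg (posSemidef_gram ℝ _).det_nonneg
          (posSemidef_gram ℝ _).det_nonneg) fun j _ => det_gram_window_mul_le v j k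
    _ = Icyc v (k + 1) ^ 2 := by
        rw [Finset.prod_mul_distrib, ← hIcyc, ← hshift, sq]

/-- Log-concavity of the cyclic Gram products: `I_ℓ² ≥ I_{ℓ-1} · I_{ℓ+1}` for
`2 ≤ ℓ ≤ n − 1`. -/
theorem stmt10 {H : Type*} [NormedAddCommGroup H] [InnerProductSpace ℝ H]
    (n : ℕ) [NeZero n] (v : ZMod n → H) (ℓ : ℕ) (h2 : 2 ≤ ℓ) (hn : ℓ ≤ n - 1) :
    Icyc v (ℓ - 1) * Icyc v (ℓ + 1) ≤ (Icyc v ℓ) ^ 2 :=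
  stmt10_general n v ℓ h2
end

section
/- With the cyclic products I_ℓ := ∏_{j=1}^n G(v_j,…,v_{j+ℓ−1}) of Gram determinants of n vectors v₁,…,v_n in a real inner product space (indices mod n), for every ℓ ∈ {1,…,n} one has I_ℓ ≥ (G(v₁,…,v_n))^ℓ. -/
/-- The Gram determinant `G(v₁,…,v_n)` of the full family. -/
noncomputable def gramFull {H : Type*} [NormedAddCommGroup H] [InnerProductSpace ℝ H]
    {n : ℕ} [NeZero n] (v : ZMod n → H) : ℝ :=
  Matrix.det (Matrix.of fun a b : ZMod n => (inner ℝ (v a) (v b) : ℝ))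

open Matrix

section GramDeterminant

variable {E : Type*} [NormedAddCommGroup E] [InnerProductSpace ℝ E]

theorem Submodule.norm_sub_starProjection_eq_infDist {𝕜 F : Type*} [RCLike 𝕜]
    [NormedAddCommGroup F] [InnerProductSpace 𝕜 F] (U : Submodule 𝕜 F)
    [U.HasOrthogonalProjection] (x : F) :
    ‖x - U.starProjection x‖ = Metric.infDist x U := by
  rw [starProjection_minimal, Metric.infDist_eq_iInf]
  simp only [dist_eq_norm]
  rfl

theorem Matrix.gram_sum_smul_s11 {𝕜 F ι κ : Type*} [RCLike 𝕜] [SeminormedAddCommGroup F]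
    [InnerProductSpace 𝕜 F] [Fintype ι] [Fintype κ] (u : ι → F) (A : Matrix ι κ 𝕜) :
    gram 𝕜 (fun j => ∑ i, A i j • u i) = Aᴴ * gram 𝕜 u * A := by
  ext j l
  simp only [gram_apply, sum_inner, inner_sum, inner_smul_left, inner_smul_right, mul_apply,
    conjTranspose_apply, Finset.sum_mul, Finset.mul_sum, RCLike.star_def]
  refine Finset.sum_congr rfl fun i _ => Finset.sum_congr rfl fun m _ => ?_
  ring

theorem det_gram_snoc_add_sum {k : ℕ} (w : Fin k → E) (x : E) (c : Fin k → ℝ) :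
    (gram ℝ (Fin.snoc w (x + ∑ i, c i • w i) : Fin (k + 1) → E)).det =
      (gram ℝ (Fin.snoc w x : Fin (k + 1) → E)).det := by
  set A : Matrix (Fin (k + 1)) (Fin (k + 1)) ℝ := updateCol 1 (Fin.last k) (Fin.snoc c 1)
  have hA : A.det = 1 := by
    simpa [one_apply] using det_updateCol_sum (1 : Matrix _ _ ℝ) (Fin.last k) (Fin.snoc c 1)
  have hfamily : (Fin.snoc w (x + ∑ i, c i • w i) : Fin (k + 1) → E) =
      fun j => ∑ i, A i j • (Fin.snoc w x : Fin (k + 1) → E) i := by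
    funext j
    refine Fin.lastCases ?_ (fun b => ?_) j
    · simp [A, Fin.sum_univ_castSucc, add_comm]
    · simp [A, one_apply]
  rw [hfamily, gram_sum_smul_s11, det_mul, det_mul, det_conjTranspose, hA]
  simp

theorem det_gram_snoc_of_forall_inner_eq_zero {k : ℕ} (w : Fin k → E) {q : E}
    (hq : ∀ i, inner ℝ (w i) q = 0) :
    (gram ℝ (Fin.snoc w q : Fin (k + 1) → E)).det = (gram ℝ w).det * ‖q‖ ^ 2 := by
  have hblocks : (gram ℝ (Fin.snoc w q : Fin (k + 1) → E)).submatrix finSumFinEquiv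
      finSumFinEquiv = fromBlocks (gram ℝ w) 0 0 (of fun _ _ : Fin 1 => ‖q‖ ^ 2) := by
    have hleft : ∀ i : Fin k, (Fin.snoc w q : Fin (k + 1) → E) (Fin.castAdd 1 i) = w i :=
      Fin.snoc_castSucc (α := fun _ => E) q w
    have hright : ∀ j : Fin 1, (Fin.snoc w q : Fin (k + 1) → E) (Fin.natAdd k j) = q := by
      intro j
      rw [Subsingleton.elim j (Fin.last 0), Fin.natAdd_last]
      exact Fin.snoc_last (α := fun _ => E) q w
    have hq' : ∀ i, inner ℝ q (w i) = 0 := fun i => real_inner_comm q (w i) ▸ hq i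
    ext (i | i) (j | j) <;> simp [hleft, hright, hq, hq']
  rw [← det_submatrix_equiv_self finSumFinEquiv, hblocks, det_fromBlocks_zero₂₁,
    det_unique (of fun _ _ : Fin 1 => ‖q‖ ^ 2)]
  rfl

theorem det_gram_snoc {k : ℕ} (w : Fin k → E) (x : E) :
    (gram ℝ (Fin.snoc w x : Fin (k + 1) → E)).det =
      (gram ℝ w).det * Metric.infDist x (Submodule.span ℝ (Set.range w)) ^ 2 := by
  set U := Submodule.span ℝ (Set.range w)
  have : FiniteDimensional ℝ U := FiniteDimensional.span_of_finite ℝ (Set.finite_range w)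
  obtain ⟨c, hc⟩ := (Submodule.mem_span_range_iff_exists_fun ℝ).mp (U.starProjection_apply_mem x)
  have hq : ∀ i, inner ℝ (w i) (x - U.starProjection x) = 0 := fun i =>
    (Submodule.mem_orthogonal U _).mp (U.sub_starProjection_mem_orthogonal x) _
      (Submodule.subset_span (Set.mem_range_self i))
  rw [← U.norm_sub_starProjection_eq_infDist, ← det_gram_snoc_of_forall_inner_eq_zero w hq,
    ← det_gram_snoc_add_sum w (x - U.starProjection x) c, hc, sub_add_cancel]

theorem det_gram_mul_det_gram_init_tail_le {k : ℕ} (w : Fin (k + 2) → E) :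
    (gram ℝ w).det * (gram ℝ (Fin.init (Fin.tail w))).det ≤
      (gram ℝ (Fin.init w)).det * (gram ℝ (Fin.tail w)).det := by
  have hw := det_gram_snoc (Fin.init w) (w (Fin.last _))
  have htail := det_gram_snoc (Fin.init (Fin.tail w)) (Fin.tail w (Fin.last k))
  rw [Fin.snoc_init_self] at hw htail
  rw [show Fin.tail w (Fin.last k) = w (Fin.last (k + 1)) from rfl] at htail
  have hspan : Submodule.span ℝ (Set.range (Fin.init (Fin.tail w))) ≤
      Submodule.span ℝ (Set.range (Fin.init w)) := by
    refine Submodule.span_mono ?_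
    rintro _ ⟨i, rfl⟩
    exact ⟨i.succ, congrArg w (Fin.succ_castSucc i).symm⟩
  have hdist := pow_le_pow_left₀ Metric.infDist_nonneg
    (Metric.infDist_le_infDist_of_subset (x := w (Fin.last _)) hspan ⟨0, zero_mem _⟩) 2
  have hdets := mul_nonneg (posSemidef_gram ℝ (Fin.init w)).det_nonneg
    (posSemidef_gram ℝ (Fin.init (Fin.tail w))).det_nonneg
  rw [hw, htail]
  linarith [mul_le_mul_of_nonneg_left hdist hdets]

end GramDeterminant

theorem mul_apply_succ_le_of_concave {a : ℕ → ℝ} {n : ℕ} (h0 : a 0 = 0)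
    (hconc : ∀ k, k + 2 ≤ n → a k + a (k + 2) ≤ 2 * a (k + 1)) {k : ℕ} (hk : k + 1 ≤ n) :
    (k : ℝ) * a (k + 1) ≤ (k + 1) * a k := by
  induction k with
  | zero => simp [h0]
  | succ k ih =>
    have hprev := ih (by omega)
    have hconc_k := hconc k hk
    push_cast
    nlinarith

theorem mul_apply_le_mul_apply_of_concave {a : ℕ → ℝ} {n ℓ : ℕ} (h0 : a 0 = 0)
    (hconc : ∀ k, k + 2 ≤ n → a k + a (k + 2) ≤ 2 * a (k + 1)) (hℓn : ℓ ≤ n) :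
    (ℓ : ℝ) * a n ≤ n * a ℓ := by
  induction n, hℓn using Nat.le_induction with
  | base => rfl
  | succ m hℓm ih =>
    have hstep := mul_apply_succ_le_of_concave h0 hconc le_rfl
    have ih := ih fun k hk => hconc k (by omega)
    rcases Nat.eq_zero_or_pos ℓ with rfl | hℓ
    · simp [h0]
    · have hm : (0 : ℝ) < m := by exact_mod_cast hℓ.trans_le hℓm
      push_cast
      nlinarith

theorem pow_le_pow_of_logConcave {I : ℕ → ℝ} {n ℓ : ℕ} (h0 : I 0 = 1)
    (hpos : ∀ k ≤ n, 0 < I k)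
    (hlc : ∀ k, k + 2 ≤ n → I (k + 2) * I k ≤ I (k + 1) ^ 2) (hℓn : ℓ ≤ n) :
    I n ^ ℓ ≤ I ℓ ^ n := by
  have hconc : ∀ k, k + 2 ≤ n →
      Real.log (I k) + Real.log (I (k + 2)) ≤ 2 * Real.log (I (k + 1)) := by
    intro k hk
    have h := Real.log_le_log (mul_pos (hpos _ hk) (hpos k (by omega))) (hlc k hk)
    rw [Real.log_mul (hpos _ hk).ne' (hpos k (by omega)).ne', Real.log_pow] at h
    push_cast at h
    linarith
  have h := mul_apply_le_mul_apply_of_concave (a := fun k => Real.log (I k)) (by simp [h0]) hconc hℓn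
  rw [← Real.log_pow, ← Real.log_pow] at h
  exact (Real.log_le_log_iff (pow_pos (hpos n le_rfl) ℓ) (pow_pos (hpos ℓ hℓn) n)).mp h

theorem ZMod.add_natCast_fin_injective {n k : ℕ} (j : ZMod n) (hk : k ≤ n) :
    Function.Injective fun a : Fin k => j + ((a : ℕ) : ZMod n) := by
  intro a b hab
  have h := congrArg ZMod.val (add_left_cancel hab)
  rwa [ZMod.val_cast_of_lt (a.isLt.trans_le hk), ZMod.val_cast_of_lt (b.isLt.trans_le hk),
    Fin.val_inj] at h

section Cyclic

variable {E : Type*} {n : ℕ}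

def cyclicBlock (v : ZMod n → E) (j : ZMod n) (k : ℕ) : Fin k → E :=
  fun a => v (j + ((a : ℕ) : ZMod n))

theorem init_cyclicBlock (v : ZMod n → E) (j : ZMod n) (k : ℕ) :
    Fin.init (cyclicBlock v j (k + 1)) = cyclicBlock v j k := by
  funext a
  simp [cyclicBlock, Fin.init]

theorem tail_cyclicBlock (v : ZMod n → E) (j : ZMod n) (k : ℕ) :
    Fin.tail (cyclicBlock v j (k + 1)) = cyclicBlock v (j + 1) k := by
  funext a
  simp only [cyclicBlock, Fin.tail, Fin.val_succ, Nat.cast_succ]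
  ring_nf

variable [NormedAddCommGroup E] [InnerProductSpace ℝ E] [NeZero n]

theorem gramFull_eq_det_gram (v : ZMod n → E) : gramFull v = (gram ℝ v).det :=
  rfl

theorem gramFull_nonneg (v : ZMod n → E) : 0 ≤ gramFull v :=
  (posSemidef_gram ℝ v).det_nonneg

theorem Icyc_eq_prod_det_gram (v : ZMod n → E) (k : ℕ) :
    Icyc v k = ∏ j, (gram ℝ (cyclicBlock v j k)).det :=
  rfl

theorem Icyc_nonneg (v : ZMod n → E) (k : ℕ) : 0 ≤ Icyc v k :=
  Finset.prod_nonneg fun j _ => (posSemidef_gram ℝ (cyclicBlock v j k)).det_nonneg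

theorem Icyc_zero (v : ZMod n → E) : Icyc v 0 = 1 :=
  Finset.prod_eq_one fun _ _ => det_fin_zero

theorem Icyc_add_two_mul_le_sq (v : ZMod n → E) (k : ℕ) :
    Icyc v (k + 2) * Icyc v k ≤ Icyc v (k + 1) ^ 2 := by
  set G : ZMod n → ℕ → ℝ := fun j k => (gram ℝ (cyclicBlock v j k)).det
  have hshift : ∀ k, ∏ j, G (j + 1) k = ∏ j, G j k := fun k =>
    Equiv.prod_comp (Equiv.addRight (1 : ZMod n)) fun j => G j k
  have hblock : ∀ j, G j (k + 2) * G (j + 1) k ≤ G j (k + 1) * G (j + 1) (k + 1) := by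
    intro j
    have h := det_gram_mul_det_gram_init_tail_le (cyclicBlock v j (k + 2))
    rwa [init_cyclicBlock, tail_cyclicBlock, init_cyclicBlock] at h
  simp only [Icyc_eq_prod_det_gram, sq]
  calc (∏ j, G j (k + 2)) * ∏ j, G j k
      = ∏ j, G j (k + 2) * G (j + 1) k := by rw [← hshift k, Finset.prod_mul_distrib]
    _ ≤ ∏ j, G j (k + 1) * G (j + 1) (k + 1) :=
        Finset.prod_le_prod (fun j _ => mul_nonneg (posSemidef_gram ℝ _).det_nonneg
          (posSemidef_gram ℝ _).det_nonneg) fun j _ => hblock j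
    _ = (∏ j, G j (k + 1)) * ∏ j, G j (k + 1) := by rw [Finset.prod_mul_distrib, hshift]

theorem Icyc_self (v : ZMod n → E) : Icyc v n = gramFull v ^ n := by
  have hblock : ∀ j, (gram ℝ (cyclicBlock v j n)).det = gramFull v := by
    intro j
    have hbij : Function.Bijective fun a : Fin n => j + ((a : ℕ) : ZMod n) :=
      (Fintype.bijective_iff_injective_and_card _).mpr
        ⟨ZMod.add_natCast_fin_injective j le_rfl, by simp [ZMod.card]⟩
    rw [gramFull_eq_det_gram]
    exact det_submatrix_equiv_self (Equiv.ofBijective _ hbij) (gram ℝ v)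
  simp [Icyc_eq_prod_det_gram, hblock, ZMod.card]

theorem Icyc_pos (v : ZMod n → E) (hG : 0 < gramFull v) {k : ℕ} (hk : k ≤ n) :
    0 < Icyc v k := by
  rw [gramFull_eq_det_gram] at hG
  have hv : LinearIndependent ℝ v := linearIndependent_of_det_gram_ne_zero hG.ne'
  refine Finset.prod_pos fun j _ => (posDef_gram_of_linearIndependent ?_).det_pos
  exact hv.comp _ (ZMod.add_natCast_fin_injective j hk)

end Cyclic

/-- For every `ℓ ∈ {1,…,n}`, `I_ℓ ≥ (G(v₁,…,v_n))^ℓ`. -/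
theorem stmt11 {H : Type*} [NormedAddCommGroup H] [InnerProductSpace ℝ H]
    (n : ℕ) [NeZero n] (v : ZMod n → H) (ℓ : ℕ) (h1 : 1 ≤ ℓ) (hn : ℓ ≤ n) :
    (gramFull v) ^ ℓ ≤ Icyc v ℓ := by
  rcases (gramFull_nonneg v).eq_or_lt with hG | hG
  · rw [← hG, zero_pow (by omega)]
    exact Icyc_nonneg v ℓ
  · have key := pow_le_pow_of_logConcave (Icyc_zero v) (fun k hk => Icyc_pos v hG hk)
      (fun k _ => Icyc_add_two_mul_le_sq v k) hn
    rw [Icyc_self, ← pow_mul, mul_comm, pow_mul] at key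
    exact (pow_le_pow_iff_left₀ (pow_nonneg hG.le ℓ) (Icyc_nonneg v ℓ) (NeZero.ne n)).mp key
end

section
/- Let ‖·‖_μ be a norm on ℝⁿ whose unit ball K is compact with nonempty interior, and let (u₁,…,u_n) ∈ Kⁿ maximize |det(u₁,…,u_n)|. Let u₁*,…,u_n* be the dual basis (u_i*·u_j = δ_{ij}). Then for all v ∈ ℝⁿ: max_{i} |u_i*·v| ≤ ‖v‖_μ ≤ ∑_{i=1}^n |u_i*·v|. Consequently, (2ⁿ/n!)|det(u₁,…,u_n)| ≤ |K| ≤ 2ⁿ|det(u₁,…,u_n)|. -/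
/-!
Replacing `u i` by a point `w` of the unit ball `K` multiplies `det (u₁,…,u_n)` by the dual
coordinate `⟪u_i*, w⟫`, so maximality of the determinant bounds every dual coordinate by `1` on
`K`; by homogeneity `|⟪u_i*, v⟫| ≤ N v`. Conversely, writing `v = ∑ ⟪u_i*, v⟫ u_i`, the triangle
inequality gives `N v ≤ ∑ |⟪u_i*, v⟫|`. Thus the linear map sending the standard basis to the
`u_i` maps the cross-polytope into `K` and the cube onto a superset of `K`, and it scales volumes
by `|det (u₁,…,u_n)|`.
-/

open MeasureTheory

theorem Matrix.det_updateCol_mulVec {ι R : Type*} [Fintype ι] [DecidableEq ι] [CommRing R]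
    (A : Matrix ι ι R) (i : ι) (c : ι → R) :
    (A.updateCol i (A.mulVec c)).det = c i * A.det := by
  rw [← smul_eq_mul, ← A.det_updateCol_sum]
  congr 2
  ext k
  simp only [Matrix.mulVec, dotProduct, smul_eq_mul, mul_comm]

theorem sum_inner_smul_eq_self_of_biorthogonal {ι E : Type*} [Fintype ι] [DecidableEq ι]
    [NormedAddCommGroup E] [InnerProductSpace ℝ E] [FiniteDimensional ℝ E]
    (hcard : Module.finrank ℝ E = Fintype.card ι) {u ustar : ι → E}
    (hdual : ∀ i j, inner ℝ (ustar i) (u j) = if i = j then (1 : ℝ) else 0) (v : E) :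
    ∑ i, inner ℝ (ustar i) v • u i = v := by
  set B := Fintype.linearCombination ℝ u
  have hcoeff : ∀ c i, inner ℝ (ustar i) (B c) = c i := by
    intro c i
    simp [B, Fintype.linearCombination_apply, inner_sum, real_inner_smul_right, hdual]
  have hB : Function.Surjective B :=
    (LinearMap.injective_iff_surjective_of_finrank_eq_finrank (by simp [hcard])).1
      fun c c' h => funext fun i => by rw [← hcoeff c i, h, hcoeff]
  obtain ⟨c, rfl⟩ := hB v
  simp_rw [hcoeff]
  rfl

namespace Seminorm

variable {E : Type*} [AddCommGroup E] [Module ℝ E] (p : Seminorm ℝ E)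

theorem abs_le_of_forall_le_one (f : E →ₗ[ℝ] ℝ) (hf : ∀ w, p w ≤ 1 → |f w| ≤ 1) (v : E) :
    |f v| ≤ p v := by
  refine le_of_forall_pos_le_add fun ε hε => ?_
  have hr : 0 < p v + ε := by positivity
  have h := hf ((p v + ε)⁻¹ • v) <| by
    rw [map_smul_eq_mul, norm_inv, Real.norm_of_nonneg hr.le, inv_mul_le_one₀ hr]
    linarith
  rwa [map_smul, smul_eq_mul, abs_mul, abs_inv, abs_of_pos hr, inv_mul_le_one₀ hr] at h

theorem sum_smul_le_sum_abs {ι : Type*} [Fintype ι] {u : ι → E} (hu : ∀ i, p (u i) ≤ 1)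
    (c : ι → ℝ) : p (∑ i, c i • u i) ≤ ∑ i, |c i| :=
  calc p (∑ i, c i • u i) ≤ ∑ i, p (c i • u i) :=
        Finset.le_sum_of_subadditive p (map_zero p).le (map_add_le_add p) _ _
    _ ≤ ∑ i, |c i| := Finset.sum_le_sum fun i _ => by
        rw [map_smul_eq_mul, Real.norm_eq_abs]
        exact mul_le_of_le_one_right (abs_nonneg _) (hu i)

end Seminorm

section Parallelepiped

variable {ι : Type*} [Fintype ι] [DecidableEq ι] {u ustar : ι → EuclideanSpace ℝ ι}

theorem det_ne_zero_of_biorthogonal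
    (hdual : ∀ i j, inner ℝ (ustar i) (u j) = if i = j then (1 : ℝ) else 0) :
    (Matrix.of fun a b => u b a).det ≠ 0 := by
  refine Matrix.det_ne_zero_of_left_inverse (B := Matrix.of fun i a => ustar i a) ?_
  ext i j
  simp [Matrix.mul_apply, Matrix.one_apply, ← hdual, PiLp.inner_apply, mul_comm]

theorem abs_inner_le_one_of_det_le {K : Set (EuclideanSpace ℝ ι)}
    (hdual : ∀ i j, inner ℝ (ustar i) (u j) = if i = j then (1 : ℝ) else 0)
    (humax : ∀ w : ι → EuclideanSpace ℝ ι, (∀ i, w i ∈ K) →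
      |(Matrix.of fun a b => w b a).det| ≤ |(Matrix.of fun a b => u b a).det|)
    (humem : ∀ i, u i ∈ K) (i : ι) {w : EuclideanSpace ℝ ι} (hw : w ∈ K) :
    |inner ℝ (ustar i) w| ≤ 1 := by
  set M := Matrix.of fun a b => u b a
  have hcol : (Matrix.of fun a b => Function.update u i w b a) =
      M.updateCol i (M.mulVec fun j => inner ℝ (ustar j) w) := by
    ext a b
    rcases eq_or_ne b i with rfl | hb
    · conv_lhs => rw [← sum_inner_smul_eq_self_of_biorthogonal (by simp) hdual w]
      simp [M, Matrix.mulVec, dotProduct, mul_comm]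
    · simp [M, hb]
  have h := humax (Function.update u i w) fun j => by
    rcases eq_or_ne j i with rfl | hj
    · simpa using hw
    · simpa [hj] using humem j
  rw [hcol, Matrix.det_updateCol_mulVec, abs_mul] at h
  exact (mul_le_iff_le_one_left (abs_pos.2 (det_ne_zero_of_biorthogonal hdual))).1 h

theorem toEuclideanLin_of_apply (x : EuclideanSpace ℝ ι) :
    Matrix.toEuclideanLin (Matrix.of fun a b => u b a) x = ∑ j, x j • u j := by
  ext a
  simp [Matrix.mulVec, dotProduct, mul_comm]

end Parallelepiped

section Volume

variable {ι : Type*} [Fintype ι]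

theorem EuclideanSpace.volume_preimage_ofLp (s : Set (ι → ℝ)) :
    volume (WithLp.ofLp ⁻¹' s : Set (EuclideanSpace ℝ ι)) = volume s :=
  (EuclideanSpace.volume_preserving_symm_measurableEquiv_toLp ι).measure_preimage_equiv s

theorem EuclideanSpace.volume_cube :
    volume {x : EuclideanSpace ℝ ι | ∀ i, |x i| ≤ 1} = ENNReal.ofReal (2 ^ Fintype.card ι) := by
  have h : {y : ι → ℝ | ∀ i, |y i| ≤ 1} = Set.univ.pi fun _ => Set.Icc (-1) 1 := by
    ext y
    simp only [Set.mem_ofPred_eq, Set.mem_pi, Set.mem_univ, true_implies, Set.mem_Icc, abs_le]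
  rw [← Set.preimage_ofPred_eq (p := fun y : ι → ℝ => ∀ i, |y i| ≤ 1),
    EuclideanSpace.volume_preimage_ofLp, h, volume_pi_pi]
  norm_num [Real.volume_Icc, ENNReal.ofReal_pow]

theorem EuclideanSpace.volume_crossPolytope :
    volume {x : EuclideanSpace ℝ ι | ∑ i, |x i| ≤ 1} =
      ENNReal.ofReal (2 ^ Fintype.card ι / (Fintype.card ι).factorial) := by
  rw [← Set.preimage_ofPred_eq (p := fun y : ι → ℝ => ∑ i, |y i| ≤ 1),
    EuclideanSpace.volume_preimage_ofLp]
  rcases isEmpty_or_nonempty ι with hι | hι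
  · simp [volume_pi]
  · have h := volume_sum_rpow_le (ι := ι) le_rfl 1
    simp only [Real.rpow_one, div_one] at h
    rw [h]
    norm_num [Real.Gamma_nat_eq_factorial]

variable [DecidableEq ι]

theorem volume_image_toEuclideanLin (A : Matrix ι ι ℝ) (s : Set (EuclideanSpace ℝ ι)) :
    volume (Matrix.toEuclideanLin A '' s) = ENNReal.ofReal |A.det| * volume s := by
  rw [Measure.addHaar_image_linearMap, Matrix.toEuclideanLin_eq_toLin_orthonormal,
    LinearMap.det_toLin]

variable {A : Matrix ι ι ℝ} {K : Set (EuclideanSpace ℝ ι)}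

theorem volume_le_of_subset_image_cube
    (hK : K ⊆ Matrix.toEuclideanLin A '' {x | ∀ i, |x i| ≤ 1}) :
    volume K ≤ ENNReal.ofReal (2 ^ Fintype.card ι * |A.det|) := by
  refine (measure_mono hK).trans_eq ?_
  rw [volume_image_toEuclideanLin, EuclideanSpace.volume_cube,
    ← ENNReal.ofReal_mul (abs_nonneg _), mul_comm]

theorem le_volume_of_image_crossPolytope_subset
    (hK : Matrix.toEuclideanLin A '' {x | ∑ i, |x i| ≤ 1} ⊆ K) :
    ENNReal.ofReal (2 ^ Fintype.card ι / (Fintype.card ι).factorial * |A.det|) ≤ volume K := by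
  refine le_of_eq_of_le ?_ (measure_mono hK)
  rw [volume_image_toEuclideanLin, EuclideanSpace.volume_crossPolytope,
    ← ENNReal.ofReal_mul (abs_nonneg _), mul_comm]

end Volume

theorem stmt14_general (n : ℕ) (N : EuclideanSpace ℝ (Fin n) → ℝ)
    (hNhom : ∀ (c : ℝ) u, N (c • u) = |c| * N u)
    (hNtri : ∀ u v, N (u + v) ≤ N u + N v)
    (u : Fin n → EuclideanSpace ℝ (Fin n))
    (humem : ∀ i, N (u i) ≤ 1)
    (humax : ∀ w : Fin n → EuclideanSpace ℝ (Fin n), (∀ i, N (w i) ≤ 1) →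
      |Matrix.det (Matrix.of fun a b : Fin n => w b a)| ≤
        |Matrix.det (Matrix.of fun a b : Fin n => u b a)|)
    (ustar : Fin n → EuclideanSpace ℝ (Fin n))
    (hdual : ∀ i j, (inner ℝ (ustar i) (u j) : ℝ) = if i = j then 1 else 0) :
    (∀ v : EuclideanSpace ℝ (Fin n),
      (⨆ i : Fin n, |(inner ℝ (ustar i) v : ℝ)|) ≤ N v ∧
        N v ≤ ∑ i : Fin n, |(inner ℝ (ustar i) v : ℝ)|) ∧
    (2 ^ n / (Nat.factorial n : ℝ)) * |Matrix.det (Matrix.of fun a b : Fin n => u b a)| ≤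
      (volume {u : EuclideanSpace ℝ (Fin n) | N u ≤ 1}).toReal ∧
    (volume {u : EuclideanSpace ℝ (Fin n) | N u ≤ 1}).toReal ≤
      2 ^ n * |Matrix.det (Matrix.of fun a b : Fin n => u b a)| := by
  let p : Seminorm ℝ (EuclideanSpace ℝ (Fin n)) := Seminorm.of N hNtri (by simpa using hNhom)
  set K := {v : EuclideanSpace ℝ (Fin n) | N v ≤ 1}
  have hrep := sum_inner_smul_eq_self_of_biorthogonal (by simp) hdual
  have hcoord (i : Fin n) (v) : |inner ℝ (ustar i) v| ≤ N v :=
    p.abs_le_of_forall_le_one (innerₛₗ ℝ (ustar i))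
      (fun _ hw => abs_inner_le_one_of_det_le (K := K) hdual humax humem i hw) v
  have hsum (c : Fin n → ℝ) : N (∑ i, c i • u i) ≤ ∑ i, |c i| := p.sum_smul_le_sum_abs humem c
  have hvol_le := volume_le_of_subset_image_cube (K := K) fun v hv =>
    ⟨WithLp.toLp 2 fun i => inner ℝ (ustar i) v, fun i => (hcoord i v).trans hv,
      by rw [toEuclideanLin_of_apply]; exact hrep v⟩
  have hle_vol := le_volume_of_image_crossPolytope_subset (K := K) <| by
    rintro _ ⟨x, hx, rfl⟩
    rw [Set.mem_ofPred_eq, toEuclideanLin_of_apply]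
    exact (hsum x).trans hx
  rw [Fintype.card_fin] at hvol_le hle_vol
  refine ⟨fun v => ⟨Real.iSup_le (fun i => hcoord i v) (apply_nonneg p v), ?_⟩, ?_, ?_⟩
  · simpa [hrep v] using hsum fun i => inner ℝ (ustar i) v
  · exact (ENNReal.ofReal_le_iff_le_toReal (ne_top_of_le_ne_top ENNReal.ofReal_ne_top hvol_le)).1
      hle_vol
  · exact ENNReal.toReal_le_of_le_ofReal (by positivity) hvol_le

/-- John-type position via a maximal-volume inscribed parallelepiped: let `N` be a norm
on `ℝⁿ` whose unit ball `K = {u : N u ≤ 1}` is compact with nonempty interior, let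
`(u₁,…,u_n) ∈ Kⁿ` maximize `|det(u₁,…,u_n)|`, and let `u₁*,…,u_n*` be the dual basis
(`⟨u_i*, u_j⟩ = δ_{ij}`). Then for all `v`,
`max_i |⟨u_i*, v⟩| ≤ N v ≤ ∑_i |⟨u_i*, v⟩|`, and consequently
`(2ⁿ/n!)|det(u₁,…,u_n)| ≤ |K| ≤ 2ⁿ|det(u₁,…,u_n)|`. -/
theorem stmt14 (n : ℕ) (N : EuclideanSpace ℝ (Fin n) → ℝ)
    (hN0 : ∀ u, 0 ≤ N u)
    (hNdef : ∀ u, N u = 0 ↔ u = 0)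
    (hNhom : ∀ (c : ℝ) u, N (c • u) = |c| * N u)
    (hNtri : ∀ u v, N (u + v) ≤ N u + N v)
    (hKc : IsCompact {u : EuclideanSpace ℝ (Fin n) | N u ≤ 1})
    (hKint : (interior {u : EuclideanSpace ℝ (Fin n) | N u ≤ 1}).Nonempty)
    (u : Fin n → EuclideanSpace ℝ (Fin n))
    (humem : ∀ i, N (u i) ≤ 1)
    (humax : ∀ w : Fin n → EuclideanSpace ℝ (Fin n), (∀ i, N (w i) ≤ 1) →
      |Matrix.det (Matrix.of fun a b : Fin n => w b a)| ≤
        |Matrix.det (Matrix.of fun a b : Fin n => u b a)|)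
    (ustar : Fin n → EuclideanSpace ℝ (Fin n))
    (hdual : ∀ i j, (inner ℝ (ustar i) (u j) : ℝ) = if i = j then 1 else 0) :
    (∀ v : EuclideanSpace ℝ (Fin n),
      (⨆ i : Fin n, |(inner ℝ (ustar i) v : ℝ)|) ≤ N v ∧
        N v ≤ ∑ i : Fin n, |(inner ℝ (ustar i) v : ℝ)|) ∧
    (2 ^ n / (Nat.factorial n : ℝ)) * |Matrix.det (Matrix.of fun a b : Fin n => u b a)| ≤
      (volume {u : EuclideanSpace ℝ (Fin n) | N u ≤ 1}).toReal ∧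
    (volume {u : EuclideanSpace ℝ (Fin n) | N u ≤ 1}).toReal ≤
      2 ^ n * |Matrix.det (Matrix.of fun a b : Fin n => u b a)| :=
  stmt14_general n N hNhom hNtri u humem humax ustar hdual
end

section
/- Restricted weak-type substitute for Hölder: let (X, σ) be a measure space, w, d nonnegative measurable functions with d > 0 a.e., E ⊆ X measurable, and 1 < p < ∞ with conjugate p'. Then ∫_E w dσ ≤ 2 (∫_E d dσ)^{1/p} · [sup_{ε>0} ε^{1−p'} ∫_X 1_{d < ε w} · w dσ]^{1/p'}. -/
open MeasureTheory ENNReal NNReal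

/-!
For every `ε > 0` split `E` along the level set `{d < ε w}`. Off the level set `w ≤ d / ε`,
so Chebyshev bounds its share of `∫_E w` by `ε⁻¹ ∫_E d`; on it, the definition of the supremum
`S` gives `ε^{p'-1} S`. Hence `∫_E w ≤ ε⁻¹ ∫_E d + ε^{p'-1} S` for all `ε > 0`, and choosing
`ε^{p'} = ∫_E d / S` makes both terms equal to `(∫_E d)^{1/p} S^{1/p'}`. If `∫_E d` or `S`
vanishes, this choice is impossible but `∫_E w = 0`: `d > 0` a.e., and the level sets `{d < n w}`
exhaust `{w > 0}`.
-/

lemma NNReal.exists_inv_mul_add_rpow_mul_eq {p q : ℝ} (hpq : p.HolderConjugate q) {a b : ℝ≥0}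
    (ha : a ≠ 0) (hb : b ≠ 0) :
    ∃ ε : ℝ≥0, ε ≠ 0 ∧ ε⁻¹ * a + ε ^ (q - 1) * b = 2 * a ^ (1 / p) * b ^ (1 / q) := by
  set ε := (a / b) ^ (1 / q)
  have hε : ε ≠ 0 := (NNReal.rpow_pos (div_pos (pos_iff_ne_zero.2 ha) (pos_iff_ne_zero.2 hb))).ne'
  have hεq : ε ^ q * b = a := by
    rw [NNReal.rpow_self_rpow_inv hpq.symm.ne_zero, div_mul_cancel₀ a hb]
  have hbalance : ε⁻¹ * a = ε ^ (q - 1) * b := by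
    rw [← hεq, NNReal.rpow_sub_one hε, div_eq_inv_mul, mul_assoc]
  have hexp : 1 / q * (q - 1) = 1 / p := by
    have := hpq.one_div_add_one_div
    field_simp [hpq.symm.ne_zero] at this ⊢
    linarith
  have hvalue : ε ^ (q - 1) * b = a ^ (1 / p) * b ^ (1 / q) := by
    have hb_split : b = b ^ (1 / p) * b ^ (1 / q) := by
      rw [← NNReal.rpow_add hb, hpq.one_div_add_one_div, div_one, NNReal.rpow_one]
    rw [← NNReal.rpow_mul, hexp, NNReal.div_rpow]
    nth_rewrite 2 [hb_split]
    field_simp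
  exact ⟨ε, hε, by rw [hbalance, hvalue]; ring⟩

lemma ENNReal.le_two_mul_rpow_mul_rpow_of_forall_le {p q : ℝ} (hpq : p.HolderConjugate q)
    {W D S : ℝ≥0∞} (hD : D ≠ 0) (hS : S ≠ 0)
    (h : ∀ ε : ℝ≥0, ε ≠ 0 → W ≤ (ε : ℝ≥0∞)⁻¹ * D + (ε : ℝ≥0∞) ^ (q - 1) * S) :
    W ≤ 2 * D ^ (1 / p) * S ^ (1 / q) := by
  rcases eq_or_ne D ⊤ with rfl | hDt
  · rw [ENNReal.top_rpow_of_pos hpq.one_div_pos, ENNReal.mul_top two_ne_zero,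
      ENNReal.top_mul (ENNReal.rpow_pos_of_nonneg (pos_iff_ne_zero.2 hS)
        hpq.symm.one_div_nonneg).ne']
    exact le_top
  rcases eq_or_ne S ⊤ with rfl | hSt
  · rw [ENNReal.top_rpow_of_pos hpq.symm.one_div_pos, ENNReal.mul_top (mul_ne_zero two_ne_zero
      (ENNReal.rpow_pos_of_nonneg (pos_iff_ne_zero.2 hD) hpq.one_div_nonneg).ne')]
    exact le_top
  lift D to ℝ≥0 using hDt
  lift S to ℝ≥0 using hSt
  obtain ⟨ε, hε, hεeq⟩ :=
    NNReal.exists_inv_mul_add_rpow_mul_eq hpq (by simpa using hD) (by simpa using hS)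
  calc W ≤ (ε : ℝ≥0∞)⁻¹ * D + (ε : ℝ≥0∞) ^ (q - 1) * S := h ε hε
    _ = ((2 * D ^ (1 / p) * S ^ (1 / q) : ℝ≥0) : ℝ≥0∞) := by
      rw [← hεeq]; push_cast [ENNReal.coe_inv hε, ENNReal.coe_rpow_of_ne_zero hε]; rfl
    _ = 2 * (D : ℝ≥0∞) ^ (1 / p) * (S : ℝ≥0∞) ^ (1 / q) := by
      push_cast [ENNReal.coe_rpow_of_nonneg _ hpq.one_div_nonneg,
        ENNReal.coe_rpow_of_nonneg _ hpq.symm.one_div_nonneg]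
      rfl

section

variable {X : Type*} [MeasurableSpace X]

noncomputable def weakTypeSup (μ : Measure X) (w d : X → ℝ≥0) (q : ℝ) : ℝ≥0∞ :=
  ⨆ (ε : ℝ≥0) (_ : 0 < ε), (ε : ℝ≥0∞) ^ (1 - q) * ∫⁻ x in {x | d x < ε * w x}, (w x : ℝ≥0∞) ∂μ

variable {μ : Measure X} {w d : X → ℝ≥0}

lemma MeasureTheory.Measure.eq_zero_of_lintegral_eq_zero_of_ae_pos (hd : Measurable d)
    (hpos : ∀ᵐ x ∂μ, 0 < d x)
    (h : ∫⁻ x, (d x : ℝ≥0∞) ∂μ = 0) : μ = 0 := by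
  rw [lintegral_eq_zero_iff hd.coe_nnreal_ennreal] at h
  refine ae_eq_bot.1 (Filter.eventually_false_iff_eq_bot.1 ?_)
  filter_upwards [h, hpos] with x hx hxpos
  simp_all

lemma setLIntegral_setOf_mul_le_le (hd : Measurable d) {ε : ℝ≥0} (hε : ε ≠ 0) :
    ∫⁻ x in {x | ε * w x ≤ d x}, (w x : ℝ≥0∞) ∂μ ≤ (ε : ℝ≥0∞)⁻¹ * ∫⁻ x, (d x : ℝ≥0∞) ∂μ :=
  calc ∫⁻ x in {x | ε * w x ≤ d x}, (w x : ℝ≥0∞) ∂μ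
      ≤ ∫⁻ x in {x | ε * w x ≤ d x}, (ε : ℝ≥0∞)⁻¹ * d x ∂μ := by
        refine setLIntegral_mono (by fun_prop) fun x hx => ?_
        rw [← ENNReal.coe_inv hε, ← ENNReal.coe_mul, ENNReal.coe_le_coe]
        exact (le_inv_mul_iff₀ (pos_iff_ne_zero.2 hε)).2 hx
    _ = (ε : ℝ≥0∞)⁻¹ * ∫⁻ x in {x | ε * w x ≤ d x}, (d x : ℝ≥0∞) ∂μ :=
        lintegral_const_mul _ hd.coe_nnreal_ennreal
    _ ≤ (ε : ℝ≥0∞)⁻¹ * ∫⁻ x, (d x : ℝ≥0∞) ∂μ := by gcongr; exact Measure.restrict_le_self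

lemma setLIntegral_lt_le_rpow_mul_weakTypeSup (q : ℝ) {ε : ℝ≥0} (hε : ε ≠ 0) :
    ∫⁻ x in {x | d x < ε * w x}, (w x : ℝ≥0∞) ∂μ ≤ (ε : ℝ≥0∞) ^ (q - 1) * weakTypeSup μ w d q := by
  have hsup : (ε : ℝ≥0∞) ^ (1 - q) * ∫⁻ x in {x | d x < ε * w x}, (w x : ℝ≥0∞) ∂μ ≤
      weakTypeSup μ w d q :=
    le_iSup₂_of_le ε (pos_iff_ne_zero.2 hε) le_rfl
  calc ∫⁻ x in {x | d x < ε * w x}, (w x : ℝ≥0∞) ∂μ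
      = (ε : ℝ≥0∞) ^ (q - 1) *
          ((ε : ℝ≥0∞) ^ (1 - q) * ∫⁻ x in {x | d x < ε * w x}, (w x : ℝ≥0∞) ∂μ) := by
        rw [← mul_assoc, ← ENNReal.rpow_add _ _ (coe_ne_zero.2 hε) coe_ne_top]
        simp
    _ ≤ (ε : ℝ≥0∞) ^ (q - 1) * weakTypeSup μ w d q := by gcongr

lemma setLIntegral_le_inv_mul_add_rpow_mul_weakTypeSup (hw : Measurable w) (hd : Measurable d)
    (E : Set X) (q : ℝ) {ε : ℝ≥0} (hε : ε ≠ 0) :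
    ∫⁻ x in E, (w x : ℝ≥0∞) ∂μ ≤
      (ε : ℝ≥0∞)⁻¹ * ∫⁻ x in E, (d x : ℝ≥0∞) ∂μ + (ε : ℝ≥0∞) ^ (q - 1) * weakTypeSup μ w d q := by
  have hA : MeasurableSet {x | d x < ε * w x} := measurableSet_lt hd (hw.const_mul ε)
  rw [← lintegral_add_compl _ hA, add_comm]
  gcongr
  · simpa only [Set.compl_ofPred, not_lt] using setLIntegral_setOf_mul_le_le hd hε
  · refine le_trans ?_ (setLIntegral_lt_le_rpow_mul_weakTypeSup q hε)
    gcongr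
    exact Measure.restrict_le_self

lemma ae_eq_zero_of_weakTypeSup_eq_zero (hw : Measurable w) (hd : Measurable d) {q : ℝ}
    (h : weakTypeSup μ w d q = 0) : ∀ᵐ x ∂μ, (w x : ℝ≥0∞) = 0 := by
  have hlevel (n : ℕ) : ∀ᵐ x ∂μ, x ∈ {x | d x < (n + 1 : ℝ≥0) * w x} → (w x : ℝ≥0∞) = 0 := by
    have := setLIntegral_lt_le_rpow_mul_weakTypeSup (μ := μ) (w := w) (d := d) q
      (ε := n + 1) (by positivity)
    rwa [h, mul_zero, nonpos_iff_eq_zero, setLIntegral_eq_zero_iff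
      (measurableSet_lt hd (hw.const_mul _)) hw.coe_nnreal_ennreal] at this
  filter_upwards [ae_all_iff.2 hlevel] with x hx
  by_contra hwx
  obtain ⟨n, hn⟩ := exists_nat_gt (d x / w x)
  have hwx' : 0 < w x := pos_iff_ne_zero.2 (by simpa using hwx)
  exact hwx (hx n ((div_lt_iff₀ hwx').1 (hn.trans (by simp))))

end

theorem stmt16_general {X : Type*} [MeasurableSpace X] (σ : Measure X)
    (w d : X → ℝ≥0) (hw : Measurable w) (hd : Measurable d)
    (hd0 : ∀ᵐ x ∂σ, 0 < d x)
    (E : Set X)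
    (p p' : ℝ) (hp : 1 < p) (hpp' : 1 / p + 1 / p' = 1) :
    ∫⁻ x in E, (w x : ℝ≥0∞) ∂σ ≤
      2 * (∫⁻ x in E, (d x : ℝ≥0∞) ∂σ) ^ (1 / p) *
        (⨆ (ε : ℝ≥0) (_ : 0 < ε),
            (ε : ℝ≥0∞) ^ (1 - p') * ∫⁻ x in {x | d x < ε * w x}, (w x : ℝ≥0∞) ∂σ) ^
          (1 / p') := by
  have hpq : p.HolderConjugate p' :=
    Real.holderConjugate_iff.2 ⟨hp, by simpa only [one_div] using hpp'⟩
  change _ ≤ _ * _ * weakTypeSup σ w d p' ^ (1 / p')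
  by_cases hD : ∫⁻ x in E, (d x : ℝ≥0∞) ∂σ = 0
  · rw [Measure.eq_zero_of_lintegral_eq_zero_of_ae_pos hd (ae_restrict_of_ae hd0) hD,
      lintegral_zero_measure]
    exact zero_le
  by_cases hS : weakTypeSup σ w d p' = 0
  · rw [lintegral_congr_ae (ae_restrict_of_ae (ae_eq_zero_of_weakTypeSup_eq_zero hw hd hS)),
      lintegral_zero]
    exact zero_le
  exact ENNReal.le_two_mul_rpow_mul_rpow_of_forall_le hpq hD hS fun ε hε =>
    setLIntegral_le_inv_mul_add_rpow_mul_weakTypeSup hw hd E p' hε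

/-- Restricted weak-type substitute for Hölder: for nonnegative measurable `w, d` with
`d > 0` a.e., a measurable set `E`, and conjugate exponents `1 < p, p' < ∞`,
`∫_E w dσ ≤ 2 (∫_E d dσ)^{1/p} · [sup_{ε>0} ε^{1−p'} ∫ 1_{d < ε w} w dσ]^{1/p'}`. -/
theorem stmt16 {X : Type*} [MeasurableSpace X] (σ : Measure X)
    (w d : X → ℝ≥0) (hw : Measurable w) (hd : Measurable d)
    (hd0 : ∀ᵐ x ∂σ, 0 < d x)
    (E : Set X) (hE : MeasurableSet E)
    (p p' : ℝ) (hp : 1 < p) (hpp' : 1 / p + 1 / p' = 1) :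
    ∫⁻ x in E, (w x : ℝ≥0∞) ∂σ ≤
      2 * (∫⁻ x in E, (d x : ℝ≥0∞) ∂σ) ^ (1 / p) *
        (⨆ (ε : ℝ≥0) (_ : 0 < ε),
            (ε : ℝ≥0∞) ^ (1 - p') * ∫⁻ x in {x | d x < ε * w x}, (w x : ℝ≥0∞) ∂σ) ^
          (1 / p') :=
  stmt16_general σ w d hw hd hd0 E p p' hp hpp'
end

section
/- Let π(x,y) := ½(|x−y|² − R²) on ℝⁿ×ℝⁿ with R > 0, and let f := (4R)^{−n}·χ_{[−2R,2R]ⁿ}. For any vectors ω₁,…,ω_n ∈ ℝⁿ, there is a constant C_n depending only on n such that for all x ∈ [−R,R)ⁿ: ∑_{i=1}^n ‖ω_i‖ ≤ C_n R ∫_{|x−y|=R} f(y) (∑_{i=1}^n |(x−y)·ω_i|²)^{1/2} dH^{n−1}(y)/R. -/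
/-!
For `y` on the sphere `‖x - y‖ = R` every coordinate satisfies `|yᵢ| ≤ |xᵢ| + R ≤ 2R`, so the
density equals `(4R)⁻ⁿ` there; translating by `x` and dilating by `R` turns the integral into
`(4R)⁻ⁿ R^(n-1) ∫_{Sⁿ⁻¹} √(∑ᵢ ⟪w, ωᵢ⟫²) dH^(n-1)(w)`. The integrand is at least `|⟪w, ωᵢ⟫|`, which
is at least `‖ωᵢ‖ / 2` on the cap `{⟪w, ωᵢ / ‖ωᵢ‖⟫ ≥ 1/2}`, and by rotation invariance all these
caps have the same measure `κ`. Hence `∑ᵢ ‖ωᵢ‖ ≤ (2n / κ) ∫_{Sⁿ⁻¹} √(∑ᵢ ⟪w, ωᵢ⟫²)`, which is the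
claim with `C = 2n 4ⁿ / κ`. It remains to see `0 < κ < ∞`: the sphere is covered by the radial
projections of the `2n` faces of the cube `[-1, 1]ⁿ`, Lipschitz images of `[-1, 1]ⁿ⁻¹`, and the
projection forgetting the first coordinate maps a cap onto a set containing a small cube.
-/

open MeasureTheory Metric Set
open scoped ENNReal NNReal RealInnerProductSpace

section RadialProjection

variable {E : Type*} [NormedAddCommGroup E] [NormedSpace ℝ E]

theorem norm_inv_norm_smul_sub_inv_norm_smul_le {a : E} (ha : a ≠ 0) (b : E) :
    ‖‖a‖⁻¹ • a - ‖b‖⁻¹ • b‖ ≤ 2 * ‖a - b‖ / ‖a‖ := by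
  have ha' : 0 < ‖a‖ := norm_pos_iff.2 ha
  have hb : ‖(‖a‖⁻¹ - ‖b‖⁻¹) • b‖ ≤ ‖a - b‖ / ‖a‖ := by
    rcases eq_or_ne b 0 with rfl | hb
    · simp only [smul_zero, norm_zero]; positivity
    have hb' : 0 < ‖b‖ := norm_pos_iff.2 hb
    rw [norm_smul, Real.norm_eq_abs, inv_sub_inv ha'.ne' hb'.ne', abs_div,
      abs_of_pos (mul_pos ha' hb'), div_mul_eq_mul_div, mul_div_mul_right _ _ hb'.ne']
    gcongr
    exact abs_norm_sub_norm_le b a |>.trans_eq (norm_sub_rev b a)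
  calc ‖‖a‖⁻¹ • a - ‖b‖⁻¹ • b‖ = ‖‖a‖⁻¹ • (a - b) + (‖a‖⁻¹ - ‖b‖⁻¹) • b‖ := by
        congr 1; module
    _ ≤ ‖a - b‖ / ‖a‖ + ‖a - b‖ / ‖a‖ := by
        refine (norm_add_le _ _).trans (add_le_add ?_ hb)
        rw [norm_smul, norm_inv, norm_norm, inv_mul_eq_div]
    _ = 2 * ‖a - b‖ / ‖a‖ := by ring

theorem lipschitzOnWith_inv_norm_smul :
    LipschitzOnWith 2 (fun y : E => ‖y‖⁻¹ • y) {y | 1 ≤ ‖y‖} := by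
  refine LipschitzOnWith.of_dist_le_mul fun a (ha : 1 ≤ ‖a‖) b _ => ?_
  rw [dist_eq_norm, dist_eq_norm, NNReal.coe_ofNat]
  refine (norm_inv_norm_smul_sub_inv_norm_smul_le (norm_pos_iff.1 (one_pos.trans_le ha)) b).trans ?_
  exact div_le_of_le_mul₀ (by positivity) (by positivity) (by nlinarith [norm_nonneg (a - b)])

end RadialProjection

theorem LipschitzOnWith.hausdorffMeasure_image_lt_top {ι X : Type*} [Fintype ι] [EMetricSpace X]
    [MeasurableSpace X] [BorelSpace X] {K : ℝ≥0} {f : (ι → ℝ) → X} {s : Set (ι → ℝ)}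
    (hf : LipschitzOnWith K f s) (hs : Bornology.IsBounded s) :
    μH[Fintype.card ι] (f '' s) < ∞ := by
  refine (hf.hausdorffMeasure_image_le (Nat.cast_nonneg _)).trans_lt ?_
  rw [hausdorffMeasure_pi_real]
  exact ENNReal.mul_lt_top (by simp) hs.measure_lt_top

theorem lipschitzWith_insertNth {α : Type*} [PseudoMetricSpace α] {m : ℕ} (i : Fin (m + 1))
    (s : α) : LipschitzWith 1 (fun v : Fin m → α => (i.insertNth s v : Fin (m + 1) → α)) := by
  refine LipschitzWith.of_dist_le_mul fun v v' => ?_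
  rw [NNReal.coe_one, one_mul, dist_pi_le_iff dist_nonneg]
  refine fun j => i.succAboveCases ?_ (fun k => ?_) j
  · simp
  · simpa only [Fin.insertNth_apply_succAbove] using dist_le_pi_dist v v' k

theorem IsCompact.integrableOn_of_measure_lt_top {X : Type*} [TopologicalSpace X] [T2Space X]
    [MeasurableSpace X] [OpensMeasurableSpace X] {μ : Measure X} {K : Set X} (hK : IsCompact K)
    (hμ : μ K < ∞) {f : X → ℝ} (hf : ContinuousOn f K) : IntegrableOn f K μ := by
  obtain ⟨C, hC⟩ := hK.exists_bound_of_continuousOn hf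
  exact .of_bound hμ (hf.aestronglyMeasurable hK.measurableSet) C
    (ae_restrict_of_forall_mem hK.measurableSet hC)

section Homothety

variable {E : Type*} [NormedAddCommGroup E] [NormedSpace ℝ E] [MeasurableSpace E] [BorelSpace E]

theorem map_sub_smul_hausdorffMeasure {d : ℝ} (hd : 0 ≤ d) (x : E) {R : ℝ} (hR : R ≠ 0) :
    Measure.map (fun w => x - R • w) μH[d] = ‖R‖₊⁻¹ ^ d • μH[d] := by
  have hφ : (fun w => x - R • w) = AffineMap.homothety x (-R) ∘ IsometryEquiv.addRight x := by
    ext w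
    simp only [Function.comp_apply, IsometryEquiv.addRight_apply, AffineMap.homothety_apply,
      vsub_eq_sub, add_sub_cancel_right, neg_smul, vadd_eq_add]
    abel
  rw [hφ, ← Measure.map_map (AffineMap.homothety_continuous x _).measurable
    (IsometryEquiv.addRight x).continuous.measurable, IsometryEquiv.map_hausdorffMeasure,
    map_homothety_hausdorffMeasure hd x (neg_ne_zero.2 hR), nnnorm_neg]

theorem setIntegral_sphere_sub_eq {G : Type*} [NormedAddCommGroup G] [NormedSpace ℝ G] {d : ℝ}
    (hd : 0 ≤ d) (x : E) {R : ℝ} (hR : 0 < R) (F : E → G) :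
    ∫ y in sphere x R, F (x - y) ∂μH[d] = R ^ d • ∫ w in sphere 0 1, F (R • w) ∂μH[d] := by
  have hemb : MeasurableEmbedding (fun w : E => x - R • w) :=
    ((Homeomorph.smulOfNeZero R hR.ne').trans (Homeomorph.subLeft x)).measurableEmbedding
  have hpre : (fun w : E => x - R • w) ⁻¹' sphere x R = sphere 0 1 := by
    ext w; simp [norm_smul, abs_of_pos hR, hR.ne']
  have hμ : (μH[d] : Measure E) = ‖R‖₊ ^ d • Measure.map (fun w => x - R • w) μH[d] := by
    rw [map_sub_smul_hausdorffMeasure hd x hR.ne', smul_smul, ← NNReal.mul_rpow,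
      mul_inv_cancel₀ (nnnorm_ne_zero_iff.2 hR.ne'), NNReal.one_rpow, one_smul]
  conv_lhs => rw [hμ]
  rw [Measure.restrict_smul, integral_smul_nnreal_measure, hemb.setIntegral_map, hpre,
    NNReal.smul_def, NNReal.coe_rpow, coe_nnnorm, Real.norm_of_nonneg hR.le]
  simp only [sub_sub_cancel]

end Homothety

theorem sqrt_sum_inner_sq_smul {E ι : Type*} [NormedAddCommGroup E] [InnerProductSpace ℝ E]
    [Fintype ι] (ω : ι → E) {R : ℝ} (hR : 0 ≤ R) (w : E) :
    √(∑ i, ⟪R • w, ω i⟫ ^ 2) = R * √(∑ i, ⟪w, ω i⟫ ^ 2) := by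
  simp_rw [real_inner_smul_left, mul_pow, ← Finset.mul_sum]
  rw [Real.sqrt_mul (sq_nonneg R), Real.sqrt_sq hR]

section SphereCap

variable {E : Type*} [NormedAddCommGroup E] [InnerProductSpace ℝ E]

def sphereCap (u : E) (a : ℝ) : Set E := {w ∈ sphere 0 1 | a ≤ ⟪w, u⟫}

theorem sphereCap_subset_sphere (u : E) (a : ℝ) : sphereCap u a ⊆ sphere 0 1 := fun _ hw => hw.1

theorem isClosed_sphereCap (u : E) (a : ℝ) : IsClosed (sphereCap u a) :=
  isClosed_sphere.inter <|
    isClosed_le (f := fun _ => a) continuous_const (continuous_id.inner continuous_const)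

variable [MeasurableSpace E] [BorelSpace E]

theorem hausdorffMeasure_sphereCap_eq {u v : E} (hu : ‖u‖ = 1) (hv : ‖v‖ = 1) (d a : ℝ) :
    μH[d] (sphereCap u a) = μH[d] (sphereCap v a) := by
  set A := (ℝ ∙ (v - u))ᗮ.reflection
  have hAv : A v = u := Submodule.reflection_sub (hv.trans hu.symm)
  have hpre : A.toIsometryEquiv ⁻¹' sphereCap u a = sphereCap v a := by
    ext w
    simp [sphereCap, ← hAv, A.inner_map_map]
  rw [← hpre, IsometryEquiv.hausdorffMeasure_preimage]

variable [ProperSpace E] {d : ℝ}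

theorem measureReal_sphereCap_mul_le_integral_abs_inner (hfin : μH[d] (sphere (0 : E) 1) < ∞)
    {u : E} (hu : ‖u‖ = 1) (v : E) :
    μH[d].real (sphereCap u (1 / 2)) * (‖v‖ / 2) ≤ ∫ w in sphere 0 1, |⟪w, v⟫| ∂μH[d] := by
  rcases eq_or_ne v 0 with rfl | hv
  · simp
  set û := ‖v‖⁻¹ • v
  have hû : ‖û‖ = 1 := norm_smul_inv_norm hv
  have hint : IntegrableOn (fun w => |⟪w, v⟫|) (sphere 0 1) μH[d] :=
    (isCompact_sphere 0 1).integrableOn_of_measure_lt_top hfin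
      (continuous_id.inner continuous_const).abs.continuousOn
  have hcap : MeasurableSet (sphereCap û (1 / 2)) := (isClosed_sphereCap û _).measurableSet
  calc μH[d].real (sphereCap u (1 / 2)) * (‖v‖ / 2)
      = ∫ _ in sphereCap û (1 / 2), ‖v‖ / 2 ∂μH[d] := by
        rw [setIntegral_const, smul_eq_mul, measureReal_def, measureReal_def,
          hausdorffMeasure_sphereCap_eq hu hû]
    _ ≤ ∫ w in sphereCap û (1 / 2), |⟪w, v⟫| ∂μH[d] := by
        refine setIntegral_mono_on ?_ (hint.mono_set (sphereCap_subset_sphere _ _)) hcap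
          fun w hw => ?_
        · exact integrableOn_const ((measure_mono (sphereCap_subset_sphere _ _)).trans_lt hfin).ne
        have h := hw.2
        rw [real_inner_smul_right, le_inv_mul_iff₀ (norm_pos_iff.2 hv)] at h
        exact le_abs.2 (.inl (by linarith))
    _ ≤ ∫ w in sphere 0 1, |⟪w, v⟫| ∂μH[d] :=
        setIntegral_mono_set hint (.of_forall fun _ => abs_nonneg _)
          (sphereCap_subset_sphere _ _).eventuallyLE

theorem sum_norm_le_integral_sqrt_sum_inner_sq {ι : Type*} [Fintype ι]
    (hfin : μH[d] (sphere (0 : E) 1) < ∞) {u : E} (hu : ‖u‖ = 1)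
    (hcap : 0 < μH[d].real (sphereCap u (1 / 2))) (ω : ι → E) :
    ∑ i, ‖ω i‖ ≤ 2 * Fintype.card ι / μH[d].real (sphereCap u (1 / 2)) *
      ∫ w in sphere 0 1, √(∑ i, ⟪w, ω i⟫ ^ 2) ∂μH[d] := by
  set κ := μH[d].real (sphereCap u (1 / 2))
  set J := ∫ w in sphere 0 1, √(∑ i, ⟪w, ω i⟫ ^ 2) ∂μH[d]
  have hint : IntegrableOn (fun w => √(∑ i, ⟪w, ω i⟫ ^ 2)) (sphere 0 1) μH[d] :=
    (isCompact_sphere 0 1).integrableOn_of_measure_lt_top hfin (by fun_prop)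
  have hle : ∀ i, κ * (‖ω i‖ / 2) ≤ J := fun i =>
    (measureReal_sphereCap_mul_le_integral_abs_inner hfin hu (ω i)).trans <|
      setIntegral_mono_on ((isCompact_sphere 0 1).integrableOn_of_measure_lt_top hfin
        (by fun_prop)) hint isClosed_sphere.measurableSet fun w _ =>
        Real.abs_le_sqrt (Finset.single_le_sum (f := fun j => ⟪w, ω j⟫ ^ 2)
          (fun j _ => sq_nonneg _) (Finset.mem_univ i))
  calc ∑ i, ‖ω i‖ ≤ ∑ _i : ι, 2 / κ * J := Finset.sum_le_sum fun i _ => by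
        rw [div_mul_eq_mul_div, le_div_iff₀ hcap]; linarith [hle i]
    _ = 2 * Fintype.card ι / κ * J := by
        rw [Finset.sum_const, Finset.card_univ, nsmul_eq_mul]; ring

end SphereCap

section SphereChart

variable {m : ℕ}

/-- The radial projection onto the unit sphere of the face `{y i = s}` of the cube, in the
coordinates of the other axes. -/
noncomputable def sphereChart (i : Fin (m + 1)) (s : ℝ) (v : Fin m → ℝ) :
    EuclideanSpace ℝ (Fin (m + 1)) :=
  ‖WithLp.toLp 2 (i.insertNth s v : Fin (m + 1) → ℝ)‖⁻¹ •
    WithLp.toLp 2 (i.insertNth s v : Fin (m + 1) → ℝ)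

theorem lipschitzWith_sphereChart (i : Fin (m + 1)) {s : ℝ} (hs : |s| = 1) :
    ∃ K, LipschitzWith K (sphereChart i s) :=
  ⟨_, lipschitzOnWith_univ.1 <| lipschitzOnWith_inv_norm_smul.comp
    ((PiLp.lipschitzWith_toLp 2 _).comp (lipschitzWith_insertNth i s)).lipschitzOnWith
    fun v _ => hs ▸ by
      simpa using PiLp.norm_apply_le (WithLp.toLp 2 (i.insertNth s v : Fin (m + 1) → ℝ)) i⟩

theorem sphere_subset_biUnion_sphereChart :
    sphere (0 : EuclideanSpace ℝ (Fin (m + 1))) 1 ⊆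
      ⋃ i ∈ univ, ⋃ s ∈ ({-1, 1} : Set ℝ), sphereChart i s '' closedBall 0 1 := by
  intro w hw
  rw [mem_sphere_zero_iff_norm] at hw
  obtain ⟨i, -, hmax⟩ := Finset.univ.exists_max_image (fun j => |w j|) Finset.univ_nonempty
  set t := |w i|
  have ht : 0 < t := by
    by_contra! ht
    have : w = 0 := by
      ext j
      simpa using (hmax j (Finset.mem_univ j)).trans ht
    simp [this] at hw
  set u := t⁻¹ • w
  have hu : ∀ j, |u j| = t⁻¹ * |w j| := fun j => by simp [u, abs_mul, abs_of_pos ht]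
  have hui : |u i| = 1 := by rw [hu, inv_mul_cancel₀ ht.ne']
  refine mem_biUnion (mem_univ i) (mem_biUnion (s := ({-1, 1} : Set ℝ)) (x := u i) ?_
    ⟨i.removeNth u.ofLp, ?_, ?_⟩)
  · rcases abs_eq zero_le_one |>.1 hui with h | h <;> simp [h]
  · rw [mem_closedBall_zero_iff, pi_norm_le_iff_of_nonneg zero_le_one]
    intro j
    rw [Real.norm_eq_abs, Fin.removeNth, hu, inv_mul_le_one₀ ht]
    exact hmax _ (Finset.mem_univ _)
  · have hnorm : ‖u‖ = t⁻¹ := by simp [u, norm_smul, hw, abs_of_pos ht]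
    simp only [sphereChart, Fin.insertNth_self_removeNth, WithLp.toLp_ofLp, hnorm, inv_inv, u,
      smul_inv_smul₀ ht.ne']

end SphereChart

theorem hausdorffMeasure_sphere_lt_top (m : ℕ) :
    μH[m] (sphere (0 : EuclideanSpace ℝ (Fin (m + 1))) 1) < ∞ := by
  refine (measure_mono sphere_subset_biUnion_sphereChart).trans_lt <|
    measure_biUnion_lt_top finite_univ fun i _ => measure_biUnion_lt_top (toFinite _) fun s hs => ?_
  obtain ⟨K, hK⟩ := lipschitzWith_sphereChart i (s := s) (by rcases hs with rfl | rfl <;> simp)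
  simpa using hK.lipschitzOnWith.hausdorffMeasure_image_lt_top isBounded_closedBall

theorem closedBall_subset_image_tail_sphereCap (m : ℕ) :
    closedBall (0 : Fin m → ℝ) (1 / (m + 1)) ⊆
      (fun w : EuclideanSpace ℝ (Fin (m + 1)) => Fin.tail w.ofLp) ''
        sphereCap (EuclideanSpace.single 0 1) (1 / 2) := by
  intro v hv
  rw [mem_closedBall_zero_iff, pi_norm_le_iff_of_nonneg (by positivity)] at hv
  set s := ∑ j, v j ^ 2
  have hs : s ≤ 3 / 4 := calc
    s ≤ ∑ _j : Fin m, (1 / (m + 1 : ℝ)) ^ 2 := Finset.sum_le_sum fun j _ =>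
        sq_le_sq' (abs_le.1 (hv j)).1 (abs_le.1 (hv j)).2
    _ ≤ 3 / 4 := by
        rw [Finset.sum_const, Finset.card_univ, Fintype.card_fin, nsmul_eq_mul, div_pow,
          one_pow, mul_one_div, div_le_iff₀ (by positivity)]
        nlinarith [(m.cast_nonneg : (0 : ℝ) ≤ m)]
  have hs0 : 0 ≤ s := Finset.sum_nonneg fun j _ => sq_nonneg _
  refine ⟨WithLp.toLp 2 (Fin.cons √(1 - s) v), ⟨?_, ?_⟩, Fin.tail_cons _ _⟩
  · rw [mem_sphere_zero_iff_norm, EuclideanSpace.norm_eq, Fin.sum_univ_succ]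
    simp [Real.sq_sqrt (by linarith : 0 ≤ 1 - s), s]
  · simp only [EuclideanSpace.inner_single_right, Fin.cons_zero, one_mul, conj_trivial]
    exact Real.le_sqrt_of_sq_le (by linarith)

theorem hausdorffMeasure_sphereCap_single_pos (m : ℕ) :
    0 < μH[m] (sphereCap (EuclideanSpace.single 0 1 : EuclideanSpace ℝ (Fin (m + 1))) (1 / 2)) := by
  have htail : LipschitzWith 1 fun w : EuclideanSpace ℝ (Fin (m + 1)) => Fin.tail w.ofLp :=
    LipschitzWith.of_dist_le_mul fun w w' => by
      simpa [dist_pi_le_iff dist_nonneg, Fin.tail] using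
        fun j : Fin m => PiLp.dist_apply_le w w' j.succ
  have hvol : (μH[m] : Measure (Fin m → ℝ)) = volume := by
    simpa using hausdorffMeasure_pi_real (ι := Fin m)
  calc (0 : ℝ≥0∞) < μH[m] (closedBall (0 : Fin m → ℝ) (1 / (m + 1))) := by
        rw [hvol]; exact measure_closedBall_pos _ _ (by positivity)
    _ ≤ μH[m] (sphereCap (EuclideanSpace.single 0 1 : EuclideanSpace ℝ (Fin (m + 1))) (1 / 2)) := by
        refine (measure_mono (closedBall_subset_image_tail_sphereCap m)).trans ?_
        simpa using htail.hausdorffMeasure_image_le m.cast_nonneg _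

theorem measureReal_sphereCap_single_pos (m : ℕ) :
    0 < μH[m].real
      (sphereCap (EuclideanSpace.single 0 1 : EuclideanSpace ℝ (Fin (m + 1))) (1 / 2)) :=
  ENNReal.toReal_pos (hausdorffMeasure_sphereCap_single_pos m).ne'
    ((measure_mono (sphereCap_subset_sphere _ _)).trans_lt (hausdorffMeasure_sphere_lt_top m)).ne

theorem sphere_subset_pi_Icc {ι : Type*} [Fintype ι] {x : EuclideanSpace ℝ ι} {R : ℝ}
    (hx : ∀ i, x i ∈ Icc (-R) R) : sphere x R ⊆ {y | ∀ i, y i ∈ Icc (-(2 * R)) (2 * R)} :=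
  fun y hy i => by
    have hxy : |x i - y i| ≤ R :=
      (PiLp.norm_apply_le (x - y) i).trans_eq ((norm_sub_rev _ _).trans (mem_sphere_iff_norm.1 hy))
    constructor <;> linarith [abs_le.1 hxy, (hx i).1, (hx i).2]

/-- Lower bound for the sphere average: with `π(x,y) = ½(|x−y|² − R²)` and
`f = (4R)^{−n} χ_{[−2R,2R]ⁿ}`, there is a constant `C_n` depending only on `n` such that
for any `ω₁,…,ω_n ∈ ℝⁿ` and any `x ∈ [−R,R)ⁿ`,
`∑ᵢ ‖ωᵢ‖ ≤ C_n R ∫_{|x−y|=R} f(y) (∑ᵢ |(x−y)·ωᵢ|²)^{1/2} dH^{n−1}(y)/R`. -/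
theorem stmt17 (n : ℕ) (hn : 1 ≤ n) :
    ∃ C : ℝ, 0 < C ∧
      ∀ (R : ℝ), 0 < R →
        ∀ (x : EuclideanSpace ℝ (Fin n)) (ω : Fin n → EuclideanSpace ℝ (Fin n)),
          (∀ i, x i ∈ Set.Ico (-R) R) →
          ∑ i, ‖ω i‖ ≤
            C * R *
              ∫ y in {y : EuclideanSpace ℝ (Fin n) | ‖x - y‖ = R},
                (Set.indicator
                    {y : EuclideanSpace ℝ (Fin n) | ∀ i, y i ∈ Set.Icc (-(2 * R)) (2 * R)}
                    (fun _ => ((4 * R) ^ n)⁻¹) y) *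
                  Real.sqrt (∑ i, (inner ℝ (x - y) (ω i) : ℝ) ^ 2) / R
              ∂(Measure.hausdorffMeasure ((n : ℝ) - 1)) := by
  obtain ⟨m, rfl⟩ : ∃ m, n = m + 1 := ⟨n - 1, by omega⟩
  set κ :=
    μH[m].real (sphereCap (EuclideanSpace.single 0 1 : EuclideanSpace ℝ (Fin (m + 1))) (1 / 2))
  refine ⟨2 * (m + 1) * 4 ^ (m + 1) / κ, by positivity [measureReal_sphereCap_single_pos m],
    fun R hR x ω hx => ?_⟩
  have hsphere : {y | ‖x - y‖ = R} = sphere x R := by ext y; simp [norm_sub_rev]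
  have hdensity : ∀ y ∈ sphere x R,
      indicator {y | ∀ i, y i ∈ Icc (-(2 * R)) (2 * R)} (fun _ => ((4 * R) ^ (m + 1))⁻¹) y *
        √(∑ i, ⟪x - y, ω i⟫ ^ 2) / R = ((4 * R) ^ (m + 1))⁻¹ / R * √(∑ i, ⟪x - y, ω i⟫ ^ 2) :=
    fun y hy => by
      rw [indicator_of_mem (sphere_subset_pi_Icc (fun i => Ico_subset_Icc_self (hx i)) hy)]
      ring
  have hd : ((m + 1 : ℕ) : ℝ) - 1 = m := by push_cast; ring
  rw [hd, hsphere, setIntegral_congr_fun isClosed_sphere.measurableSet hdensity, integral_const_mul,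
    setIntegral_sphere_sub_eq m.cast_nonneg x hR fun z => √(∑ i, ⟪z, ω i⟫ ^ 2)]
  simp_rw [sqrt_sum_inner_sq_smul ω hR.le]
  rw [integral_const_mul, Real.rpow_natCast, smul_eq_mul]
  calc ∑ i, ‖ω i‖
      ≤ 2 * Fintype.card (Fin (m + 1)) / κ * ∫ w in sphere 0 1, √(∑ i, ⟪w, ω i⟫ ^ 2) ∂μH[m] :=
        sum_norm_le_integral_sqrt_sum_inner_sq (hausdorffMeasure_sphere_lt_top m) (by simp)
          (measureReal_sphereCap_single_pos m) ω
    _ = _ := by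
        rw [Fintype.card_fin, mul_pow]
        field_simp
        push_cast
        ring
end
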